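/- arXiv:1004.3019 — 2 statements merged into one kernel-verified Lean document; each statement's English description precedes it below -/
import Mathlib

section
/- Let ρ : SL₂(ℤ) → GL₄(ℂ) be an irreducible representation. Then the eigenvalues of ρ(S), where S = [[0,-1],[1,0]], are either {1,1,-1,-1} or {i,i,-i,-i}; in particular det ρ(S) = 1. -/
open Polynomial Matrix

abbrev SL2Z := Matrix.SpecialLinearGroup (Fin 2) ℤ

/-- A subspace invariant under every matrix in the image of `ρ`. -/
def RepInvariant {d : ℕ} (ρ : SL2Z →* GL (Fin d) ℂ) (W : Submodule ℂ (Fin d → ℂ)) : Prop :=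
  ∀ γ : SL2Z, ∀ v ∈ W, ((ρ γ : Matrix (Fin d) (Fin d) ℂ).mulVec v) ∈ W

/-- Irreducibility of a `d`-dimensional representation of `SL₂(ℤ)`. -/
def RepIrreducible {d : ℕ} (ρ : SL2Z →* GL (Fin d) ℂ) : Prop :=
  (⊥ : Submodule ℂ (Fin d → ℂ)) ≠ ⊤ ∧
    ∀ W : Submodule ℂ (Fin d → ℂ), RepInvariant ρ W → W = ⊥ ∨ W = ⊤

/-!
`S² = -1` is central, so by Schur's lemma `ρ(S)² = c` with `c² = 1`. Writing `c = μ²` with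
`μ ∈ {1, i}`, the operator `ρ(S)` is killed by `(X - μ)(X + μ)`, so `ℂ⁴` is the sum of its
`±μ`-eigenspaces. If one of them, `E`, had dimension `≥ 3`, then for `R = T S⁻¹`, of order 3,
the space `E ∩ ρ(R)⁻¹E ∩ ρ(R)⁻²E` would be nonzero and `ρ(R)`-stable, so it would contain a
common eigenvector of `ρ(S)` and `ρ(R)`, whose line is invariant under the generators `S, R`:
this contradicts irreducibility. Hence both eigenspaces have dimension 2, which determines the
characteristic polynomial, and `det ρ(S) = μ⁴ = 1`.
-/

open ModularGroup

def ModularGroup.R : SL2Z := T * S⁻¹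

namespace ModularGroup

lemma S_sq : S ^ 2 = -1 := by
  ext i j
  fin_cases i <;> fin_cases j <;> simp [sq, coe_S]

lemma S_pow_four : S ^ 4 = 1 := by
  rw [show 4 = 2 * 2 from rfl, pow_mul, S_sq]; simp

lemma R_pow_three : R ^ 3 = 1 := by
  ext i j
  fin_cases i <;> fin_cases j <;> simp [R, pow_succ, coe_S, coe_T, adjugate_fin_two]

lemma commute_S_sq (γ : SL2Z) : Commute (S ^ 2) γ := by
  rw [S_sq]
  exact Commute.neg_one_left γ

lemma submonoid_closure_S_R : Submonoid.closure {S, R} = ⊤ := by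
  have hfin : ∀ x ∈ ({S, R} : Set SL2Z), IsOfFinOrder x := by
    rintro x (rfl | rfl)
    exacts [isOfFinOrder_iff_pow_eq_one.mpr ⟨4, by norm_num, S_pow_four⟩,
      isOfFinOrder_iff_pow_eq_one.mpr ⟨3, by norm_num, R_pow_three⟩]
  have hT : T = R * S := by simp [R]
  have hgen : Subgroup.closure {S, R} = ⊤ := by
    rw [eq_top_iff, ← SpecialLinearGroup.SL2Z_generators, Subgroup.closure_le,
      Set.insert_subset_iff, Set.singleton_subset_iff, hT]
    exact ⟨Subgroup.subset_closure (by simp),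
      mul_mem (Subgroup.subset_closure (by simp)) (Subgroup.subset_closure (by simp))⟩
  rw [← Subgroup.closure_toSubmonoid_of_isOfFinOrder hfin, hgen, Subgroup.top_toSubmonoid]

end ModularGroup

namespace Module.End

variable {K V : Type*} [Field K] [AddCommGroup V] [Module K V] [FiniteDimensional K V]

theorem finrank_eigenspace_add_finrank_eigenspace {f : End K V} {a b : K} (hab : a ≠ b)
    (h : (f - a • 1) * (f - b • 1) = 0) :
    finrank K (f.eigenspace a) + finrank K (f.eigenspace b) = finrank K V := by
  refine le_antisymm (Submodule.finrank_add_finrank_le_of_disjoint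
    (f.eigenspaces_iSupIndep.pairwiseDisjoint hab)) ?_
  have hrange : LinearMap.range (f - b • 1) ≤ f.eigenspace a := by
    rw [eigenspace_def, LinearMap.range_le_ker_iff]
    exact h
  rw [← LinearMap.finrank_range_add_finrank_ker (f - b • 1), ← eigenspace_def]
  exact Nat.add_le_add_right (Submodule.finrank_mono hrange) _

theorem charpoly_eq_of_mul_eq_zero {f : End K V} {a b : K} (hab : a ≠ b)
    (h : (f - a • 1) * (f - b • 1) = 0) :
    f.charpoly =
      (X - C a) ^ finrank K (f.eigenspace a) * (X - C b) ^ finrank K (f.eigenspace b) := by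
  have hdvd (c : K) : (X - C c) ^ finrank K (f.eigenspace c) ∣ f.charpoly :=
    (pow_dvd_pow _ (LinearMap.finrank_eigenspace_le f c)).trans (pow_rootMultiplicity_dvd _ _)
  have hcop : IsCoprime ((X - C a) ^ finrank K (f.eigenspace a))
      ((X - C b) ^ finrank K (f.eigenspace b)) :=
    (isCoprime_X_sub_C_of_isUnit_sub (sub_ne_zero.mpr hab).isUnit).pow
  refine eq_of_monic_of_dvd_of_natDegree_le
    (((monic_X_sub_C a).pow _).mul ((monic_X_sub_C b).pow _)) f.charpoly_monic
    (hcop.mul_dvd (hdvd a) (hdvd b)) ?_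
  rw [LinearMap.charpoly_natDegree, ← finrank_eigenspace_add_finrank_eigenspace hab h,
    natDegree_mul (pow_ne_zero _ (X_sub_C_ne_zero a)) (pow_ne_zero _ (X_sub_C_ne_zero b)),
    natDegree_pow, natDegree_pow, natDegree_X_sub_C, natDegree_X_sub_C, mul_one, mul_one]

theorem exists_hasEigenvector_mem_of_pow_three_eq_one [IsAlgClosed K] {g : End K V}
    (hg : g ^ 3 = 1) {E : Submodule K V} (hE : 2 * finrank K V < 3 * finrank K E) :
    ∃ ζ v, v ∈ E ∧ g.HasEigenvector ζ v := by
  have hg3 (v : V) : g (g (g v)) = v := by simpa [pow_succ] using LinearMap.congr_fun hg v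
  let e : V ≃ₗ[K] V := LinearEquiv.ofLinearMap g (g ∘ₗ g) (LinearMap.ext hg3) (LinearMap.ext hg3)
  have hcomap (W : Submodule K V) : finrank K (W.comap g) = finrank K W := by
    rw [show g = (e : V →ₗ[K] V) from rfl, Submodule.comap_equiv_eq_map_symm]
    exact LinearEquiv.finrank_map_eq _ _
  have hinf (s t : Submodule K V) :
      finrank K s + finrank K t ≤ finrank K V + finrank K ↥(s ⊓ t) := by
    rw [← Submodule.finrank_sup_add_finrank_inf_eq]
    exact Nat.add_le_add_right (Submodule.finrank_le _) _
  -- `U` is `g`-stable because `g³ = 1`, and it is nonzero by counting dimensions.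
  set U := E ⊓ E.comap g ⊓ (E.comap g).comap g
  have hUg : ∀ u ∈ U, g u ∈ U := by
    rintro u ⟨⟨hu, hgu⟩, hggu⟩
    exact ⟨⟨hgu, hggu⟩, by simpa [hg3] using hu⟩
  have hU : 0 < finrank K U := by
    have h1 := hinf E (E.comap g)
    have h2 : _ ≤ _ + finrank K U := hinf (E ⊓ E.comap g) ((E.comap g).comap g)
    rw [hcomap] at h1
    rw [hcomap, hcomap] at h2
    omega
  have : Nontrivial U := Module.finrank_pos_iff.mp hU
  obtain ⟨ζ, hζ⟩ := exists_eigenvalue (g.restrict hUg)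
  obtain ⟨⟨u, hu⟩, hvec⟩ := hζ.exists_hasEigenvector
  refine ⟨ζ, u, hu.1.1, ?_, fun h => hvec.2 (Subtype.ext h)⟩
  exact g.eigenspace_restrict_le_eigenspace hUg ζ ⟨_, hvec.1, rfl⟩

end Module.End

section Representation

open Module

variable {d : ℕ} {ρ : SL2Z →* GL (Fin d) ℂ}

variable (ρ) in
def repEnd : SL2Z →* End ℂ (Fin d → ℂ) :=
  (toLinAlgEquiv' : Matrix (Fin d) (Fin d) ℂ ≃ₐ[ℂ] _).toMonoidHom.comp ((Units.coeHom _).comp ρ)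

lemma repEnd_eq_toLin' (γ : SL2Z) : repEnd ρ γ = toLin' (ρ γ : Matrix (Fin d) (Fin d) ℂ) := rfl

lemma repInvariant_iff {W : Submodule ℂ (Fin d → ℂ)} :
    RepInvariant ρ W ↔ ∀ γ, W ≤ W.comap (repEnd ρ γ) := Iff.rfl

lemma repInvariant_of_S_R {W : Submodule ℂ (Fin d → ℂ)} (hS : W ≤ W.comap (repEnd ρ S))
    (hR : W ≤ W.comap (repEnd ρ R)) : RepInvariant ρ W := by
  rw [repInvariant_iff]
  intro γ
  induction (submonoid_closure_S_R ▸ Submonoid.mem_top γ : γ ∈ Submonoid.closure {S, R})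
    using Submonoid.closure_induction with
  | mem x hx => rcases hx with rfl | rfl; exacts [hS, hR]
  | one => rw [map_one]; exact fun v hv => hv
  | mul x y _ _ hx hy =>
    rw [map_mul, End.mul_eq_comp, Submodule.comap_comp]
    exact hy.trans (Submodule.comap_mono hx)

lemma eq_one_of_hasEigenvector_S_R (hirr : RepIrreducible ρ) {v : Fin d → ℂ} (hv : v ≠ 0)
    {a b : ℂ} (hS : repEnd ρ S v = a • v) (hR : repEnd ρ R v = b • v) : d = 1 := by
  have hline (f : End ℂ (Fin d → ℂ)) (c : ℂ) (hf : f v = c • v) :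
      ℂ ∙ v ≤ (ℂ ∙ v).comap f := by
    rw [Submodule.span_singleton_le_iff_mem, Submodule.mem_comap, hf]
    exact Submodule.smul_mem _ _ (Submodule.mem_span_singleton_self v)
  rcases hirr.2 _ (repInvariant_of_S_R (hline _ _ hS) (hline _ _ hR)) with h | h
  · exact absurd h (by simpa using hv)
  · have := congrArg (fun W : Submodule ℂ (Fin d → ℂ) => finrank ℂ W) h
    simpa [finrank_span_singleton hv, eq_comm] using this

lemma three_mul_finrank_eigenspace_S_le (hirr : RepIrreducible ρ) (hd : d ≠ 1) (ν : ℂ) :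
    3 * finrank ℂ ((repEnd ρ S).eigenspace ν) ≤ 2 * d := by
  by_contra! h
  obtain ⟨ζ, v, hvE, hv⟩ := End.exists_hasEigenvector_mem_of_pow_three_eq_one
    (g := repEnd ρ R) (by rw [← map_pow, R_pow_three, map_one]) (by simpa using h)
  exact hd <|
    eq_one_of_hasEigenvector_S_R hirr hv.2 (End.mem_eigenspace_iff.mp hvE) hv.apply_eq_smul

lemma RepIrreducible.exists_eq_smul_one_of_commute (hirr : RepIrreducible ρ)
    {f : End ℂ (Fin d → ℂ)} (hf : ∀ γ, Commute f (repEnd ρ γ)) : ∃ c : ℂ, f = c • 1 := by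
  have : Nontrivial (Fin d → ℂ) :=
    (Submodule.nontrivial_iff ℂ).mp (nontrivial_of_ne _ _ hirr.1)
  obtain ⟨c, hc⟩ := End.exists_eigenvalue f
  have hinv : RepInvariant ρ (f.eigenspace c) := by
    rw [repInvariant_iff]
    intro γ v hv
    rw [End.mem_eigenspace_iff] at hv
    rw [Submodule.mem_comap, End.mem_eigenspace_iff, ← End.mul_apply, (hf γ).eq, End.mul_apply,
      hv, map_smul]
  rcases hirr.2 _ hinv with h | h
  · exact absurd h hc
  · exact ⟨c, LinearMap.ext fun v => by simpa using (h ▸ Submodule.mem_top : v ∈ f.eigenspace c)⟩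

lemma charpoly_S_of_sq_eq_smul {ρ : SL2Z →* GL (Fin 4) ℂ} (hirr : RepIrreducible ρ) {μ : ℂ}
    (hμ : μ ≠ 0) (h : repEnd ρ S ^ 2 = μ ^ 2 • 1) :
    (ρ S : Matrix (Fin 4) (Fin 4) ℂ).charpoly = (X - C μ) ^ 2 * (X + C μ) ^ 2 := by
  have hμμ : -μ ≠ μ := fun h' => hμ (CharZero.neg_eq_self_iff.mp h')
  have hf : (repEnd ρ S - (-μ) • 1) * (repEnd ρ S - μ • 1) = 0 := by
    rw [_root_.neg_smul μ (1 : End ℂ (Fin 4 → ℂ)), sub_neg_eq_add,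
      ← ((Commute.one_right _).smul_right μ).sq_sub_sq, h, _root_.smul_pow, one_pow, sub_self]
  have hsum := End.finrank_eigenspace_add_finrank_eigenspace hμμ hf
  have hle := three_mul_finrank_eigenspace_S_le hirr (by norm_num) μ
  have hle' := three_mul_finrank_eigenspace_S_le hirr (by norm_num) (-μ)
  rw [Module.finrank_fin_fun] at hsum
  rw [← charpoly_toLin', ← repEnd_eq_toLin', End.charpoly_eq_of_mul_eq_zero hμμ hf,
    show finrank ℂ ((repEnd ρ S).eigenspace μ) = 2 by omega,
    show finrank ℂ ((repEnd ρ S).eigenspace (-μ)) = 2 by omega, map_neg, sub_neg_eq_add, mul_comm]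

end Representation

lemma Matrix.det_eq_pow_four_of_charpoly_eq {R : Type*} [CommRing R]
    {A : Matrix (Fin 4) (Fin 4) R} {μ : R} (h : A.charpoly = (X - C μ) ^ 2 * (X + C μ) ^ 2) :
    A.det = μ ^ 4 := by
  rw [det_eq_sign_charpoly_coeff, h, coeff_zero_eq_eval_zero]
  simp only [Fintype.card_fin, eval_mul, eval_pow, eval_sub, eval_add, eval_X, eval_C]
  ring

theorem stmt_0 (ρ : SL2Z →* GL (Fin 4) ℂ) (hirr : RepIrreducible ρ) :
    (((ρ ModularGroup.S : Matrix (Fin 4) (Fin 4) ℂ).charpoly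
        = (X - C 1) ^ 2 * (X + C 1) ^ 2 ∨
      (ρ ModularGroup.S : Matrix (Fin 4) (Fin 4) ℂ).charpoly
        = (X - C Complex.I) ^ 2 * (X + C Complex.I) ^ 2) ∧
    (ρ ModularGroup.S : Matrix (Fin 4) (Fin 4) ℂ).det = 1) := by
  obtain ⟨c, hc⟩ := hirr.exists_eq_smul_one_of_commute (f := repEnd ρ S ^ 2)
    fun γ => by rw [← map_pow]; exact (commute_S_sq γ).map (repEnd ρ)
  have hc2 : c ^ 2 = 1 := by
    have hc4 : (c • (1 : Module.End ℂ (Fin 4 → ℂ))) ^ 2 = 1 := by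
      rw [← hc, ← pow_mul, ← map_pow, S_pow_four, map_one]
    rw [_root_.smul_pow, one_pow] at hc4
    exact smul_left_injective ℂ one_ne_zero (hc4.trans (one_smul ℂ _).symm)
  rcases sq_eq_one_iff.mp hc2 with rfl | rfl
  · have h := charpoly_S_of_sq_eq_smul hirr one_ne_zero (by rw [hc]; norm_num)
    exact ⟨Or.inl h, by rw [det_eq_pow_four_of_charpoly_eq h, one_pow]⟩
  · have h := charpoly_S_of_sq_eq_smul hirr Complex.I_ne_zero (by rw [hc, Complex.I_sq])
    exact ⟨Or.inr h, by rw [det_eq_pow_four_of_charpoly_eq h, Complex.I_pow_four]⟩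
end

section
/- The iterated modular derivative D_k^n = D_{k+2(n−1)} ∘ ⋯ ∘ D_{k+2} ∘ D_k can be written as qⁿ dⁿ/dqⁿ + q^{n−1} f_{n,n−1}(q) d^{n−1}/dq^{n−1} + ⋯ + f_{n,0}(q), where each f_{n,j} is holomorphic in |q| < 1, and the constant term of the subleading coefficient is f_{n,n−1}(0) = n(5(n−1) − k)/12. -/
open Real Complex

/-- `E₂(q) = 1 − 24 Σ_{n≥1} σ₁(n) qⁿ`. -/
noncomputable def E2 (q : ℂ) : ℂ :=
  1 - 24 * ∑' n : ℕ, ((∑ d ∈ Nat.divisors (n + 1), d : ℕ) : ℂ) * q ^ (n + 1)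

/-- The modular derivative in weight `k`: `D_k f = q·df/dq − (k/12)·E₂·f`. -/
noncomputable def serreD (k : ℝ) (f : ℂ → ℂ) : ℂ → ℂ :=
  fun q => q * deriv f q - (k / 12 : ℂ) * E2 q * f q

/-- The iterated modular derivative `D_k^n = D_{k+2(n−1)} ∘ ⋯ ∘ D_k`. -/
noncomputable def serreDIter : ℕ → ℝ → (ℂ → ℂ) → (ℂ → ℂ)
  | 0, _, f => f
  | n + 1, k, f => serreD (k + 2 * n) (serreDIter n k f)

/-!
Write `D_k^n = Σ_{j ≤ n} q^j f_{n,j}(q) d^j/dq^j`, with `f_{n,j} = serreCoeff k n j`.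
The Leibniz rule `D_w (q^j g h) = q^j (D_w g + j g) h + q^{j+1} g h'` turns `D_{k+2n} ∘ D_k^n`
into the same shape with `f_{n+1,j} = f_{n,j-1} + D_{k+2n} f_{n,j} + j f_{n,j}`, so `f_{n,n} = 1`
and every `f_{n,j}` is holomorphic on the unit disc, as `E₂` is there (`σ₁(m) ≤ m²`).
Since `E₂(0) = 1`, `(D_w g)(0) = -(w/12) g(0)`, hence
`f_{n+1,n}(0) = f_{n,n-1}(0) + n - (k + 2n)/12`, which sums to `(n+1)(5n - k)/12`.
-/

open Filter Topology Metric Finset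
open scoped ArithmeticFunction.sigma

theorem analyticOnNhd_tsum_mul_pow {𝕜 : Type*} [NontriviallyNormedField 𝕜] [CompleteSpace 𝕜]
    {a : ℕ → 𝕜} {d : ℕ} (ha : a =O[atTop] fun n ↦ (n : ℝ) ^ d) :
    AnalyticOnNhd 𝕜 (fun x ↦ ∑' n, a n * x ^ n) (ball 0 1) := by
  set p := FormalMultilinearSeries.ofScalars 𝕜 a
  have hradius : 1 ≤ p.radius := by
    refine ENNReal.le_of_forall_nnreal_lt fun r hr ↦ p.le_radius_of_summable_norm ?_
    have hr1 : ‖(r : ℝ)‖ < 1 := by simpa using hr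
    have := summable_norm_mul_geometric_of_norm_lt_one' (k := d) hr1
      (u := fun n ↦ ‖a n‖) (by simpa using ha.norm_left)
    simpa [p, FormalMultilinearSeries.ofScalars_norm] using this
  have hsum : p.sum = fun x ↦ ∑' n, a n * x ^ n :=
    FormalMultilinearSeries.ofScalarsSum_eq_tsum a
  rw [← hsum]
  refine (p.hasFPowerSeriesOnBall (zero_lt_one.trans_le hradius)).analyticOnNhd.mono ?_
  rw [← Metric.eball_ofReal]
  exact Metric.eball_subset_eball (by simpa using hradius)

theorem E2_eq_tsum_sigma (q : ℂ) : E2 q = 1 - 24 * ∑' n : ℕ, (σ 1 n : ℂ) * q ^ n := by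
  rw [E2, ← Nat.succ_injective.tsum_eq (f := fun n ↦ (σ 1 n : ℂ) * q ^ n)]
  · simp [ArithmeticFunction.sigma_one_apply]
  · intro n hn
    cases n with
    | zero => simp at hn
    | succ n => exact ⟨n, rfl⟩

theorem E2_zero : E2 0 = 1 := by
  simp [E2]

theorem E2_analyticOnNhd : AnalyticOnNhd ℂ E2 (ball 0 1) := by
  have hσ : (fun n ↦ (σ 1 n : ℂ)) =O[atTop] fun n ↦ (n : ℝ) ^ 2 :=
    Asymptotics.IsBigO.of_bound 1 <| Eventually.of_forall fun n ↦ by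
      simpa using (Nat.cast_le (α := ℝ)).mpr (ArithmeticFunction.sigma_le_pow_succ 1 n)
  rw [funext E2_eq_tsum_sigma]
  exact analyticOnNhd_const.sub (analyticOnNhd_const.mul (analyticOnNhd_tsum_mul_pow hσ))

section serreD

variable {w : ℝ} {f g h : ℂ → ℂ} {q : ℂ}

theorem serreD_zero : serreD w 0 = 0 := by
  funext q
  simp [serreD]

theorem serreD_apply_zero : serreD w f 0 = -(w / 12 : ℂ) * f 0 := by
  simp [serreD, E2_zero]

theorem serreD_congr (hfg : f =ᶠ[𝓝 q] g) : serreD w f q = serreD w g q := by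
  simp only [serreD, hfg.deriv_eq, hfg.eq_of_nhds]

theorem serreD_sum {ι : Type*} {s : Finset ι} {F : ι → ℂ → ℂ}
    (hF : ∀ i ∈ s, DifferentiableAt ℂ (F i) q) :
    serreD w (fun z ↦ ∑ i ∈ s, F i z) q = ∑ i ∈ s, serreD w (F i) q := by
  simp only [serreD, deriv_fun_sum hF, mul_sum, ← sum_sub_distrib]

theorem serreD_pow_mul_mul (j : ℕ) (hg : DifferentiableAt ℂ g q)
    (hh : DifferentiableAt ℂ h q) :
    serreD w (fun z ↦ z ^ j * g z * h z) q
      = q ^ j * (serreD w g q + j * g q) * h q + q ^ (j + 1) * g q * deriv h q := by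
  have hderiv : HasDerivAt (fun z ↦ z ^ j * g z * h z)
      ((j * q ^ (j - 1) * g q + q ^ j * deriv g q) * h q + q ^ j * g q * deriv h q) q :=
    ((hasDerivAt_pow j q).mul hg.hasDerivAt).mul hh.hasDerivAt
  rw [serreD, hderiv.deriv, serreD]
  cases j <;> push_cast <;> ring

theorem AnalyticOnNhd.serreD (hf : AnalyticOnNhd ℂ f (ball 0 1)) :
    AnalyticOnNhd ℂ (serreD w f) (ball 0 1) :=
  (analyticOnNhd_id.mul hf.deriv).sub ((analyticOnNhd_const.mul E2_analyticOnNhd).mul hf)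

end serreD

noncomputable def serreCoeff (k : ℝ) : ℕ → ℕ → ℂ → ℂ
  | 0, j => fun _ ↦ if j = 0 then 1 else 0
  | n + 1, j => fun q ↦
      (if j = 0 then 0 else serreCoeff k n (j - 1) q)
        + serreD (k + 2 * n) (serreCoeff k n j) q + j * serreCoeff k n j q

theorem serreCoeff_add_one_apply (k : ℝ) (n j : ℕ) (q : ℂ) :
    serreCoeff k (n + 1) j q
      = (if j = 0 then 0 else serreCoeff k n (j - 1) q)
        + serreD (k + 2 * n) (serreCoeff k n j) q + j * serreCoeff k n j q :=
  rfl

theorem serreCoeff_eq_zero_of_lt {k : ℝ} {n j : ℕ} (h : n < j) : serreCoeff k n j = 0 := by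
  induction n generalizing j with
  | zero => funext q; simp [serreCoeff, h.ne']
  | succ n ih =>
    funext q
    simp [serreCoeff, ih (by omega : n < j - 1), ih (by omega : n < j),
      serreD_zero]

theorem serreCoeff_self (k : ℝ) (n : ℕ) : serreCoeff k n n = 1 := by
  induction n with
  | zero => funext q; simp [serreCoeff]
  | succ n ih =>
    funext q
    simp [serreCoeff, ih, serreCoeff_eq_zero_of_lt (Nat.lt_succ_self n), serreD_zero]

theorem serreCoeff_analyticOnNhd (k : ℝ) (n j : ℕ) :
    AnalyticOnNhd ℂ (serreCoeff k n j) (ball 0 1) := by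
  induction n generalizing j with
  | zero => exact analyticOnNhd_const
  | succ n ih =>
    have hprev : AnalyticOnNhd ℂ (fun q ↦ if j = 0 then 0 else serreCoeff k n (j - 1) q)
        (ball 0 1) := by
      split_ifs
      exacts [analyticOnNhd_const, ih _]
    exact (hprev.add (ih j).serreD).add (analyticOnNhd_const.mul (ih j))

theorem serreCoeff_add_one_self_apply_zero (k : ℝ) (n : ℕ) :
    serreCoeff k (n + 1) n 0 = (n + 1) * (5 * n - k) / 12 := by
  induction n with
  | zero =>
    rw [serreCoeff_add_one_apply, if_pos rfl, serreCoeff_self, serreD_apply_zero, Pi.one_apply]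
    push_cast
    ring
  | succ n ih =>
    rw [serreCoeff_add_one_apply, if_neg n.succ_ne_zero, Nat.add_sub_cancel, ih, serreCoeff_self,
      serreD_apply_zero, Pi.one_apply]
    push_cast
    ring

theorem serreDIter_eq_sum (k : ℝ) (n : ℕ) {f : ℂ → ℂ}
    (hf : DifferentiableOn ℂ f (ball 0 1)) {q : ℂ} (hq : q ∈ ball (0 : ℂ) 1) :
    serreDIter n k f q
      = ∑ j ∈ range (n + 1), q ^ j * serreCoeff k n j q * iteratedDeriv j f q := by
  induction n generalizing q with
  | zero => simp [serreDIter, serreCoeff]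
  | succ n ih =>
    have hderiv : ∀ j, AnalyticOnNhd ℂ (iteratedDeriv j f) (ball 0 1) := fun j ↦ by
      rw [iteratedDeriv_eq_iterate]
      exact (hf.analyticOnNhd isOpen_ball).iterated_deriv j
    have hloc : serreDIter n k f =ᶠ[𝓝 q]
        fun z ↦ ∑ j ∈ range (n + 1), z ^ j * serreCoeff k n j z * iteratedDeriv j f z :=
      eventually_of_mem (isOpen_ball.mem_nhds hq) fun z hz ↦ ih hz
    calc serreDIter (n + 1) k f q
        = ∑ j ∈ range (n + 1), serreD (k + 2 * n)
            (fun z ↦ z ^ j * serreCoeff k n j z * iteratedDeriv j f z) q := by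
          rw [serreDIter, serreD_congr hloc, serreD_sum fun j _ ↦ ?_]
          exact ((differentiableAt_pow j).mul
            (serreCoeff_analyticOnNhd k n j q hq).differentiableAt).mul
            (hderiv j q hq).differentiableAt
      _ = ∑ j ∈ range (n + 1),
            (q ^ j * (serreD (k + 2 * n) (serreCoeff k n j) q + j * serreCoeff k n j q)
              * iteratedDeriv j f q
              + q ^ (j + 1) * serreCoeff k n j q * iteratedDeriv (j + 1) f q) := by
          refine sum_congr rfl fun j _ ↦ ?_
          rw [serreD_pow_mul_mul j (serreCoeff_analyticOnNhd k n j q hq).differentiableAt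
            (hderiv j q hq).differentiableAt, iteratedDeriv_succ]
      _ = ∑ j ∈ range (n + 2),
            (q ^ j * (if j = 0 then 0 else serreCoeff k n (j - 1) q) * iteratedDeriv j f q
              + q ^ j * (serreD (k + 2 * n) (serreCoeff k n j) q + j * serreCoeff k n j q)
                * iteratedDeriv j f q) := by
          rw [sum_add_distrib, sum_add_distrib]
          conv_rhs => rw [sum_range_succ', sum_range_succ _ (n + 1)]
          simp only [serreCoeff_eq_zero_of_lt (Nat.lt_succ_self n), serreD_zero, Pi.zero_apply,
            Nat.succ_ne_zero, if_false, if_true, Nat.add_sub_cancel]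
          ring
      _ = ∑ j ∈ range (n + 2), q ^ j * serreCoeff k (n + 1) j q * iteratedDeriv j f q :=
          sum_congr rfl fun j _ ↦ by rw [serreCoeff_add_one_apply]; ring

/-- `D_k^n = qⁿ dⁿ/dqⁿ + Σ_{j<n} q^j f_{n,j}(q) d^j/dq^j` with `f_{n,j}` holomorphic in
`|q|<1` and `f_{n,n−1}(0) = n(5(n−1)−k)/12`. -/
theorem stmt_9 (n : ℕ) (k : ℝ) :
    ∃ c : ℕ → (ℂ → ℂ),
      (∀ j < n, AnalyticOn ℂ (c j) (Metric.ball (0 : ℂ) 1)) ∧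
      (∀ f : ℂ → ℂ, DifferentiableOn ℂ f (Metric.ball (0 : ℂ) 1) →
        ∀ q ∈ Metric.ball (0 : ℂ) 1,
          serreDIter n k f q
            = q ^ n * iteratedDeriv n f q
              + ∑ j ∈ Finset.range n, q ^ j * c j q * iteratedDeriv j f q) ∧
      (1 ≤ n → c (n - 1) 0 = (n : ℂ) * (5 * ((n : ℂ) - 1) - (k : ℂ)) / 12) := by
  refine ⟨serreCoeff k n, fun j _ ↦ (serreCoeff_analyticOnNhd k n j).analyticOn,
    fun f hf q hq ↦ ?_, fun hn ↦ ?_⟩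
  · rw [serreDIter_eq_sum k n hf hq, sum_range_succ, serreCoeff_self, Pi.one_apply, mul_one,
      add_comm]
  · obtain ⟨m, rfl⟩ := Nat.exists_eq_add_of_le' hn
    rw [Nat.add_sub_cancel, serreCoeff_add_one_self_apply_zero]
    push_cast
    ring
end
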